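/- (Existence of canonical φ-coherent models, Łukasiewicz case.) Let K be a weighted Ł_n LC knowledge base and φ : ℝ → [0,1]. If K has a φ-coherent model, then K has a canonical φ-coherent model, i.e., a φ-coherent model I = (Δ, ·^I) such that for every φ-coherent model J = (Δ^J, ·^J) of K and every y ∈ Δ^J there is z ∈ Δ with B^I(z) = B^J(y) for all concept names B occurring in K. -/

import Mathlib

/-- Concepts of the boolean description logic LC. -/
inductive LC (NC : Type) : Type where
  | top : LC NC
  | bot : LC NC
  | nm : NC → LC NC
  | inter : LC NC → LC NC → LC NC
  | union : LC NC → LC NC → LC NC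
  | compl : LC NC → LC NC

/-- The concept names occurring in a concept. -/
def LC.names {NC : Type} : LC NC → Set NC
  | .top => ∅
  | .bot => ∅
  | .nm A => {A}
  | .inter C D => C.names ∪ D.names
  | .union C D => C.names ∪ D.names
  | .compl C => C.names

/-- The finite truth space C_n = {0, 1/n, ..., (n-1)/n, 1} ⊆ [0,1]. -/
def Cn (n : ℕ) : Set ℝ := {r : ℝ | ∃ i : ℕ, i ≤ n ∧ r = (i : ℝ) / (n : ℝ)}

/-- Łukasiewicz-semantics evaluation of LC concepts. -/
def lval {NC Δ : Type} (v : NC → Δ → ℝ) : LC NC → Δ → ℝ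
  | .top => fun _ => 1
  | .bot => fun _ => 0
  | .nm A => v A
  | .inter C D => fun x => max (lval v C x + lval v D x - 1) 0
  | .union C D => fun x => min (lval v C x + lval v D x) 1
  | .compl C => fun x => 1 - lval v C x

/-- Comparison operators θ ∈ {≥, ≤, >, <}. -/
inductive Ineq : Type where
  | ge : Ineq
  | le : Ineq
  | gt : Ineq
  | lt : Ineq

def Ineq.holds : Ineq → ℝ → ℝ → Prop
  | .ge, a, b => a ≥ b
  | .le, a, b => a ≤ b
  | .gt, a, b => a > b
  | .lt, a, b => a < b

/-- A weighted LC knowledge base over distinguished concepts C_1, …, C_k: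
a TBox of graded inclusions, an ABox of graded assertions, and for each
distinguished concept `Ci i` a finite set of weighted typicality inclusions
T(Ci i) ⊑ D i h with real weight w i h. -/
structure WKB (NC NI : Type) : Type where
  k : ℕ
  Ci : Fin k → LC NC
  H : Fin k → ℕ
  D : (i : Fin k) → Fin (H i) → LC NC
  w : (i : Fin k) → Fin (H i) → ℝ
  tbox : List (LC NC × LC NC × Ineq × ℝ)
  abox : List (LC NC × NI × Ineq × ℝ)
  tbox_bound : ∀ t ∈ tbox, t.2.2.2 ∈ Set.Icc (0 : ℝ) 1
  abox_bound : ∀ t ∈ abox, t.2.2.2 ∈ Set.Icc (0 : ℝ) 1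

/-- The concept names occurring in the knowledge base K. -/
def WKB.names {NC NI : Type} (K : WKB NC NI) : Set NC :=
  (⋃ i : Fin K.k, (K.Ci i).names) ∪
    (⋃ i : Fin K.k, ⋃ h : Fin (K.H i), (K.D i h).names) ∪
    (⋃ t ∈ K.tbox, t.1.names ∪ t.2.1.names) ∪
    (⋃ t ∈ K.abox, t.1.names)

/-- A finitely many-valued interpretation: concept names take values in C_n. -/
def IsInterp {NC Δ : Type} (n : ℕ) (val : NC → Δ → ℝ) : Prop :=
  ∀ A x, val A x ∈ Cn n

/-- Łukasiewicz implication: a ▷ b = min (1 - a + b) 1. -/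
noncomputable def limp (a b : ℝ) : ℝ := min (1 - a + b) 1

/-- Satisfaction of the TBox: for every inclusion C ⊑ D θ α,
(inf_x C(x) ▷ D(x)) θ α holds. -/
def SatTBoxL {NC NI Δ : Type} (K : WKB NC NI) (val : NC → Δ → ℝ) : Prop :=
  ∀ t ∈ K.tbox,
    Ineq.holds t.2.2.1 (⨅ x : Δ, limp (lval val t.1 x) (lval val t.2.1 x)) t.2.2.2

/-- Satisfaction of the ABox: for every assertion C(a) θ α, C(a^I) θ α holds. -/
def SatABoxL {NC NI Δ : Type} (K : WKB NC NI) (val : NC → Δ → ℝ) (ind : NI → Δ) : Prop :=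
  ∀ t ∈ K.abox, Ineq.holds t.2.2.1 (lval val t.1 (ind t.2.1)) t.2.2.2

/-- The weighted sum Σ_h w_{i,h} · D_{i,h}(x). -/
noncomputable def sumwL {NC NI Δ : Type} (K : WKB NC NI) (val : NC → Δ → ℝ)
    (i : Fin K.k) (x : Δ) : ℝ :=
  ∑ h : Fin (K.H i), K.w i h * lval val (K.D i h) x

/-- The weight W_i(x) ∈ ℝ ∪ {−∞} of x w.r.t. the distinguished concept C_i. -/
noncomputable def WgtL {NC NI Δ : Type} (K : WKB NC NI) (val : NC → Δ → ℝ)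
    (i : Fin K.k) (x : Δ) : EReal :=
  if 0 < lval val (K.Ci i) x then ((sumwL K val i x : ℝ) : EReal) else ⊥

/-- Faithful multipreference model: an interpretation satisfying the TBox and the
ABox such that x <_{C_i} y implies W_i(x) > W_i(y). -/
def IsFaithfulModelL {NC NI Δ : Type} (n : ℕ) (K : WKB NC NI)
    (val : NC → Δ → ℝ) (ind : NI → Δ) : Prop :=
  IsInterp n val ∧ SatTBoxL K val ∧ SatABoxL K val ind ∧
    ∀ (i : Fin K.k) (x y : Δ),
      lval val (K.Ci i) x > lval val (K.Ci i) y → WgtL K val i x > WgtL K val i y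

/-- Coherent multipreference model: an interpretation satisfying the TBox and the
ABox such that x <_{C_i} y iff W_i(x) > W_i(y). -/
def IsCoherentModelL {NC NI Δ : Type} (n : ℕ) (K : WKB NC NI)
    (val : NC → Δ → ℝ) (ind : NI → Δ) : Prop :=
  IsInterp n val ∧ SatTBoxL K val ∧ SatABoxL K val ind ∧
    ∀ (i : Fin K.k) (x y : Δ),
      (lval val (K.Ci i) x > lval val (K.Ci i) y ↔ WgtL K val i x > WgtL K val i y)

/-- φ-coherent multipreference model: an interpretation satisfying the TBox and
the ABox such that C_i(x) = φ(Σ_h w_{i,h} · D_{i,h}(x)) for all i and x. -/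
def IsPhiCoherentModelL {NC NI Δ : Type} (n : ℕ) (K : WKB NC NI) (φ : ℝ → ℝ)
    (val : NC → Δ → ℝ) (ind : NI → Δ) : Prop :=
  IsInterp n val ∧ SatTBoxL K val ∧ SatABoxL K val ind ∧
    ∀ (i : Fin K.k) (x : Δ), lval val (K.Ci i) x = φ (sumwL K val i x)


/-! Take as domain the set of all valuations `B ↦ B^J(y)` of elements y of φ-coherent models J,
each name evaluated by reading it off; canonicity then holds by construction. Concept values,
weighted sums and hence φ-coherence are computed pointwise, so they transfer from J, and the ABox
holds once individuals are interpreted through one fixed model M. For an inclusion C ⊑ D θ α the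
degree d(x) = C(x) ▷ D(x) takes finitely many values, so its infimum over the new domain is
attained at a valuation coming from some model J; hence inf_J d ≤ inf d ≤ inf_M d, and the set
{a | a θ α} is an interval. -/

open Set

theorem Set.finite_range_comp₂ {ι α β γ : Type*} (f : α → β → γ) {g : ι → α} {h : ι → β}
    (hg : (range g).Finite) (hh : (range h).Finite) :
    (range fun x => f (g x) (h x)).Finite :=
  (hg.image2 f hh).subset <|
    range_subset_iff.2 fun x => mem_image2_of_mem (mem_range_self x) (mem_range_self x)

theorem Cn_finite (n : ℕ) : (Cn n).Finite :=
  ((finite_Iic n).image fun i : ℕ => (i : ℝ) / n).subset <| by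
    rintro r ⟨i, hi, rfl⟩
    exact ⟨i, hi, rfl⟩

theorem IsInterp.finite_range {NC Δ : Type} {n : ℕ} {v : NC → Δ → ℝ} (hv : IsInterp n v)
    (A : NC) : (range (v A)).Finite :=
  (Cn_finite n).subset <| range_subset_iff.2 (hv A)

theorem Ineq.ordConnected_holds (θ : Ineq) (α : ℝ) : {a | θ.holds a α}.OrdConnected := by
  cases θ
  exacts [ordConnected_Ici, ordConnected_Iic, ordConnected_Ioi, ordConnected_Iio]

section Transfer

variable {NC NI Δ Δ' : Type}

theorem lval_congr {v : NC → Δ → ℝ} {v' : NC → Δ' → ℝ} {x : Δ} {y : Δ'}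
    (h : ∀ A, v A x = v' A y) (C : LC NC) : lval v C x = lval v' C y := by
  induction C <;> simp [lval, *]

theorem sumwL_congr (K : WKB NC NI) {v : NC → Δ → ℝ} {v' : NC → Δ' → ℝ} {x : Δ} {y : Δ'}
    (h : ∀ A, v A x = v' A y) (i : Fin K.k) : sumwL K v i x = sumwL K v' i y := by
  simp only [sumwL, lval_congr h]

theorem finite_range_lval {v : NC → Δ → ℝ} (hv : ∀ A, (range (v A)).Finite) :
    ∀ C : LC NC, (range (lval v C)).Finite
  | .top => finite_range_const
  | .bot => finite_range_const
  | .nm A => hv A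
  | .inter C D =>
      finite_range_comp₂ (fun a b => max (a + b - 1) 0) (finite_range_lval hv C)
        (finite_range_lval hv D)
  | .union C D =>
      finite_range_comp₂ (fun a b => min (a + b) 1) (finite_range_lval hv C)
        (finite_range_lval hv D)
  | .compl C => by
      rw [show lval v C.compl = (1 - ·) ∘ lval v C from rfl, range_comp]
      exact (finite_range_lval hv C).image _

noncomputable def inclDeg (v : NC → Δ → ℝ) (C D : LC NC) (x : Δ) : ℝ :=
  limp (lval v C x) (lval v D x)

theorem inclDeg_congr {v : NC → Δ → ℝ} {v' : NC → Δ' → ℝ} {x : Δ} {y : Δ'}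
    (h : ∀ A, v A x = v' A y) (C D : LC NC) : inclDeg v C D x = inclDeg v' C D y := by
  simp only [inclDeg, lval_congr h]

theorem finite_range_inclDeg {v : NC → Δ → ℝ} (hv : ∀ A, (range (v A)).Finite) (C D : LC NC) :
    (range (inclDeg v C D)).Finite :=
  finite_range_comp₂ limp (finite_range_lval hv C) (finite_range_lval hv D)

theorem satTBoxL_of_represented {n : ℕ} {K : WKB NC NI} {Δ₀ : Type} [Nonempty Δ₀]
    {v : NC → Δ → ℝ} {v₀ : NC → Δ₀ → ℝ} (hv : IsInterp n v) (hv₀ : SatTBoxL K v₀)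
    (hembed : ∀ x, ∃ z, ∀ A, v A z = v₀ A x)
    (hrep : ∀ z, ∃ (Δ' : Type) (v' : NC → Δ' → ℝ) (y : Δ'),
      IsInterp n v' ∧ SatTBoxL K v' ∧ ∀ A, v A z = v' A y) :
    SatTBoxL K v := by
  rintro ⟨C, D, θ, α⟩ ht
  change θ.holds (⨅ x, inclDeg v C D x) α
  have : Nonempty Δ := ‹Nonempty Δ₀›.map fun x => (hembed x).choose
  obtain ⟨z₀, hz₀⟩ := (range_nonempty (inclDeg v C D)).csInf_mem
    (finite_range_inclDeg hv.finite_range C D)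
  rw [sInf_range] at hz₀
  obtain ⟨Δ', v', y, hv', hT', hzy⟩ := hrep z₀
  have lower : ⨅ x, inclDeg v' C D x ≤ ⨅ x, inclDeg v C D x := by
    rw [← hz₀, inclDeg_congr hzy]
    exact ciInf_le (finite_range_inclDeg hv'.finite_range C D).bddBelow y
  have upper : ⨅ x, inclDeg v C D x ≤ ⨅ x, inclDeg v₀ C D x := le_ciInf fun x => by
    obtain ⟨z, hz⟩ := hembed x
    rw [← inclDeg_congr hz]
    exact ciInf_le (finite_range_inclDeg hv.finite_range C D).bddBelow z
  exact (θ.ordConnected_holds α).out (hT' _ ht) (hv₀ _ ht) ⟨lower, upper⟩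

end Transfer

section Canonical

variable {NC NI : Type} (n : ℕ) (K : WKB NC NI) (φ : ℝ → ℝ)

def phiCoherentTraces : Set (NC → ℝ) :=
  {f | ∃ (Δ : Type) (val : NC → Δ → ℝ) (ind : NI → Δ),
    IsPhiCoherentModelL n K φ val ind ∧ ∃ y, ∀ B, f B = val B y}

def canonicalVal (A : NC) (f : phiCoherentTraces n K φ) : ℝ := f.1 A

variable {n K φ}

theorem trace_mem_phiCoherentTraces {Δ : Type} {val : NC → Δ → ℝ} {ind : NI → Δ}
    (hM : IsPhiCoherentModelL n K φ val ind) (y : Δ) :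
    (fun B => val B y) ∈ phiCoherentTraces n K φ :=
  ⟨Δ, val, ind, hM, y, fun _ => rfl⟩

theorem isPhiCoherentModelL_canonicalVal {Δ₀ : Type} [Nonempty Δ₀] {val₀ : NC → Δ₀ → ℝ}
    {ind₀ : NI → Δ₀} (hM₀ : IsPhiCoherentModelL n K φ val₀ ind₀) :
    IsPhiCoherentModelL n K φ (canonicalVal n K φ)
      (fun a => ⟨_, trace_mem_phiCoherentTraces hM₀ (ind₀ a)⟩) := by
  have hinterp : IsInterp n (canonicalVal n K φ) := by
    rintro A ⟨f, _, val, _, hM, y, hy⟩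
    show f A ∈ Cn n
    exact hy A ▸ hM.1 A y
  refine ⟨hinterp, ?_, fun t ht => ?_, fun i ⟨_, _, val, _, hM, y, hy⟩ => ?_⟩
  · refine satTBoxL_of_represented hinterp hM₀.2.1
      (fun x => ⟨⟨_, trace_mem_phiCoherentTraces hM₀ x⟩, fun _ => rfl⟩) ?_
    rintro ⟨_, Δ, val, _, hM, y, hy⟩
    exact ⟨Δ, val, y, hM.1, hM.2.1, hy⟩
  · rw [lval_congr (v := canonicalVal n K φ) (v' := val₀) (fun _ => rfl)]
    exact hM₀.2.2.1 t ht
  · rw [lval_congr hy, sumwL_congr K hy]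
    exact hM.2.2.2 i y

end Canonical

theorem exists_canonical_phiCoherent_model_lukasiewicz_general
    {NC NI : Type} (n : ℕ) (K : WKB NC NI)
    (φ : ℝ → ℝ)
    (h : ∃ (Δ : Type) (_ : Nonempty Δ) (val : NC → Δ → ℝ) (ind : NI → Δ),
        IsPhiCoherentModelL n K φ val ind) :
    ∃ (Δ : Type) (_ : Nonempty Δ) (val : NC → Δ → ℝ) (ind : NI → Δ),
      IsPhiCoherentModelL n K φ val ind ∧
        ∀ (Δ' : Type) (_ : Nonempty Δ') (val' : NC → Δ' → ℝ) (ind' : NI → Δ'),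
          IsPhiCoherentModelL n K φ val' ind' →
            ∀ y : Δ', ∃ z : Δ, ∀ B ∈ K.names, val B z = val' B y := by
  obtain ⟨Δ₀, hne, val₀, ind₀, hM₀⟩ := h
  refine ⟨phiCoherentTraces n K φ, hne.map fun x => ⟨_, trace_mem_phiCoherentTraces hM₀ x⟩,
    canonicalVal n K φ, _, isPhiCoherentModelL_canonicalVal hM₀, ?_⟩
  intro _ _ _ _ hM' y
  exact ⟨⟨_, trace_mem_phiCoherentTraces hM' y⟩, fun _ _ => rfl⟩

/-- If a weighted Ł_n LC knowledge base K has a φ-coherent model, then it has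
a canonical φ-coherent model: a φ-coherent model I such that for every
φ-coherent model J of K and every y in the domain of J there is z in the domain
of I agreeing with y on all concept names occurring in K. -/
theorem exists_canonical_phiCoherent_model_lukasiewicz
    {NC NI : Type} (n : ℕ) (hn : 1 ≤ n) (K : WKB NC NI)
    (φ : ℝ → ℝ) (hφ : ∀ x : ℝ, φ x ∈ Set.Icc (0 : ℝ) 1)
    (h : ∃ (Δ : Type) (_ : Nonempty Δ) (val : NC → Δ → ℝ) (ind : NI → Δ),
        IsPhiCoherentModelL n K φ val ind) :
    ∃ (Δ : Type) (_ : Nonempty Δ) (val : NC → Δ → ℝ) (ind : NI → Δ),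
      IsPhiCoherentModelL n K φ val ind ∧
        ∀ (Δ' : Type) (_ : Nonempty Δ') (val' : NC → Δ' → ℝ) (ind' : NI → Δ'),
          IsPhiCoherentModelL n K φ val' ind' →
            ∀ y : Δ', ∃ z : Δ, ∀ B ∈ K.names, val B z = val' B y :=
  exists_canonical_phiCoherent_model_lukasiewicz_general n K φ h
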